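/- Given a Nelsonian modal model M = (W, ≤, R, V⁺, V⁻), form the extended intuitionistic modal model Mⁱ = (W, ≤, R, V) with V(p_i)=V⁺(p_i) and V(q_i)=V⁻(p_i). Then for every world w and every modal formula φ in the language {∧,∨,~,→,□}: M, w ⊨⁺ φ if and only if Mⁱ, w ⊨ⁱ E^m(φ), where E^m extends the Gödel-style translation E with E^m(□ψ)=□E^m(ψ) and E^m(~□ψ)=◇E^m(~ψ). -/

import Mathlib

inductive MForm : Type where
  | var : Nat → MForm
  | and : MForm → MForm → MForm
  | or  : MForm → MForm → MForm
  | neg : MForm → MForm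
  | imp : MForm → MForm → MForm
  | box : MForm → MForm

/-- A Nelsonian modal model. -/
structure MNModel where
  W : Type
  le : W → W → Prop
  refl : ∀ w, le w w
  trans : ∀ {a b c}, le a b → le b c → le a c
  Vp : Nat → W → Prop
  Vn : Nat → W → Prop
  monoP : ∀ (n : Nat) {w v}, le w v → Vp n w → Vp n v
  monoN : ∀ (n : Nat) {w v}, le w v → Vn n w → Vn n v
  R : W → W → Prop
  c1 : ∀ {w w' v}, le w w' → R w v → ∃ v', R w' v' ∧ le v v'
  c2 : ∀ {w v v'}, R w v → le v v' → ∃ w', le w w' ∧ R w' v'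

/-- Verification (`true`) and falsification (`false`) in a Nelsonian modal model. -/
def MNModel.sat (M : MNModel) : MForm → Bool → M.W → Prop
  | .var n, true, w => M.Vp n w
  | .var n, false, w => M.Vn n w
  | .and φ ψ, true, w => M.sat φ true w ∧ M.sat ψ true w
  | .and φ ψ, false, w => M.sat φ false w ∨ M.sat ψ false w
  | .or φ ψ, true, w => M.sat φ true w ∨ M.sat ψ true w
  | .or φ ψ, false, w => M.sat φ false w ∧ M.sat ψ false w
  | .neg φ, b, w => M.sat φ (!b) w
  | .imp φ ψ, true, w => ∀ v, M.le w v → M.sat φ true v → M.sat ψ true v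
  | .imp φ ψ, false, w => M.sat φ true w ∧ M.sat ψ false w
  | .box φ, true, w => ∀ v u, M.le w v → M.R v u → M.sat φ true u
  | .box φ, false, w => ∃ u, M.R w u ∧ M.sat φ false u

/-- Extended intuitionistic modal formulas (with □ and ◇) over the extended
variable set: `Sum.inl i` for `p i` and `Sum.inr i` for `q i`. -/
inductive IMForm : Type where
  | var : Nat ⊕ Nat → IMForm
  | and : IMForm → IMForm → IMForm
  | or  : IMForm → IMForm → IMForm
  | imp : IMForm → IMForm → IMForm
  | box : IMForm → IMForm
  | dia : IMForm → IMForm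

/-- An extended intuitionistic modal model. -/
structure IMModel where
  W : Type
  le : W → W → Prop
  refl : ∀ w, le w w
  trans : ∀ {a b c}, le a b → le b c → le a c
  V : Nat ⊕ Nat → W → Prop
  mono : ∀ (a : Nat ⊕ Nat) {w v}, le w v → V a w → V a v
  R : W → W → Prop
  c1 : ∀ {w w' v}, le w w' → R w v → ∃ v', R w' v' ∧ le v v'
  c2 : ∀ {w v v'}, R w v → le v v' → ∃ w', le w w' ∧ R w' v'

def IMModel.sat (M : IMModel) : IMForm → M.W → Prop
  | .var a, w => M.V a w
  | .and φ ψ, w => M.sat φ w ∧ M.sat ψ w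
  | .or φ ψ, w => M.sat φ w ∨ M.sat ψ w
  | .imp φ ψ, w => ∀ v, M.le w v → M.sat φ v → M.sat ψ v
  | .box φ, w => ∀ v u, M.le w v → M.R v u → M.sat φ u
  | .dia φ, w => ∃ u, M.R w u ∧ M.sat φ u

/-- The translation `E^m`; `Em φ true = E^m(φ)` and `Em φ false = E^m(~φ)`. -/
def Em : MForm → Bool → IMForm
  | .var n, true => .var (.inl n)
  | .var n, false => .var (.inr n)
  | .and φ ψ, true => .and (Em φ true) (Em ψ true)
  | .and φ ψ, false => .or (Em φ false) (Em ψ false)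
  | .or φ ψ, true => .or (Em φ true) (Em ψ true)
  | .or φ ψ, false => .and (Em φ false) (Em ψ false)
  | .neg φ, b => Em φ (!b)
  | .imp φ ψ, true => .imp (Em φ true) (Em ψ true)
  | .imp φ ψ, false => .and (Em φ true) (Em ψ false)
  | .box φ, true => .box (Em φ true)
  | .box φ, false => .dia (Em φ false)

/-- The extended intuitionistic modal companion of a Nelsonian modal model. -/
def MNModel.toIMModel (M : MNModel) : IMModel where
  W := M.W
  le := M.le
  refl := M.refl
  trans := M.trans
  V := fun a w => match a with
    | .inl i => M.Vp i w
    | .inr i => M.Vn i w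
  mono := by
    intro a w v hle h
    cases a with
    | inl i => exact M.monoP i hle h
    | inr i => exact M.monoN i hle h
  R := M.R
  c1 := M.c1
  c2 := M.c2

/-! Each clause of `⊨⁺` and of `⊨⁻` is the intuitionistic clause of the connective that `E^m`
puts at the head of the translation, and `V` is `V⁺` on the `p i` and `V⁻` on the `q i`. The two
polarities must be proved together, since `~` swaps them. -/
theorem MNModel.sat_iff_toIMModel_sat_Em (M : MNModel) (φ : MForm) (b : Bool) (w : M.W) :
    M.sat φ b w ↔ M.toIMModel.sat (Em φ b) w := by
  induction φ generalizing b w <;> cases b <;>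
    simp only [MNModel.sat, Em, IMModel.sat, Bool.not_true, Bool.not_false, *]
  -- what is left differs only by the definitional unfolding of `M.toIMModel`
  all_goals rfl

/-- Verification in `M` coincides with satisfaction of the `E^m`-translation in `Mⁱ`. -/
theorem toIMModel_sat (M : MNModel) (w : M.W) (φ : MForm) :
    M.sat φ true w ↔ M.toIMModel.sat (Em φ true) w :=
  M.sat_iff_toIMModel_sat_Em φ true w
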